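/- Fix a real β > 0 and let (d_l, d_r, d_g) = (2, 3, 3). For every x with 0 < x < 1 such that 0 ≤ ε(x) ≤ 1, the potential function satisfies U(x, x₂(x); ε(x)) > ε_Sha − ε(x), where x₂(x) = x·(1 − (1−x)²), ε(x) = 1 + ln( x / (1 − (1−x)²) ) / ( β·(1 − x₂(x))² ), and ε_Sha = 1 − 1/β. Consequently the potential threshold of the (2,3,3) precoded-rateless code equals its Shannon limit. -/

import Mathlib

/-!
On the fixed-point curve the exponent of the potential is pinned down:
`β (1 - ε(x)) (1 - x₂(x))² = log (2 - x)`, because `x / (1 - (1 - x)²) = 1 / (2 - x)`.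
Substituting this turns `β · (U - (ε_Sha - ε))` into `1 - x³ - log (2 - x) · (1 + 2 x₂(x))`,
and the bound `log v ≤ sinh (log v) = (v - v⁻¹) / 2` for `v ≥ 1` reduces its positivity to
`(1 - x)² (1 + 2 x (1 - x) (2 - x)) > 0`.
-/

/-- Potential function of the `(d_l = 2, d_r = 3, d_g = 3)` precoded-rateless code
with parameter `β > 0` over BEC(`ε`). -/
noncomputable def potential233 (β ε x₁ x₂ : ℝ) : ℝ :=
  3*2/(β*3) + 1 - ε
    - (3*2/(β*3)) * (1 - x₁)^3
    - (1 - ε) * (1 - x₂)^3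
    - (3/β) * (1 - (1 - x₁)^2)^2 * Real.exp (-β*(1-ε)*(1-x₂)^2)
    - (3*2/β) * x₁ * (1 - x₁)^2
    - 3 * (1 - ε) * x₂ * (1 - x₂)^2

/-- Second coordinate of the nontrivial DE fixed-point curve. -/
noncomputable def x₂curve233 (x : ℝ) : ℝ := x * (1 - (1 - x)^2)

/-- Erasure-probability coordinate of the nontrivial DE fixed-point curve. -/
noncomputable def εcurve233 (β x : ℝ) : ℝ :=
  1 + Real.log (x / (1 - (1 - x)^2)) / (β * (1 - x₂curve233 x)^2)

open Real

lemma log_le_sub_inv_div_two {v : ℝ} (hv : 1 ≤ v) : log v ≤ (v - v⁻¹) / 2 :=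
  sinh_log (by linarith) ▸ self_le_sinh_iff.mpr (log_nonneg hv)

lemma log_two_sub_mul_lt {x : ℝ} (hx0 : 0 ≤ x) (hx1 : x < 1) :
    log (2 - x) * (1 + 2 * x ^ 2 * (2 - x)) < 1 - x ^ 3 := by
  have hv : 0 < 2 - x := by linarith
  have hM : 0 < 1 + 2 * x ^ 2 * (2 - x) := by positivity
  have hlog := mul_le_mul_of_nonneg_right (log_le_sub_inv_div_two (by linarith : 1 ≤ 2 - x)) hM.le
  have hsinh_bound : ((2 - x) - (2 - x)⁻¹) / 2 * (1 + 2 * x ^ 2 * (2 - x)) =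
      1 - x ^ 3 - (1 - x) ^ 2 * (1 + 2 * x * (1 - x) * (2 - x)) / (2 * (2 - x)) := by
    field_simp
    ring
  have hgap : 0 < (1 - x) ^ 2 * (1 + 2 * x * (1 - x) * (2 - x)) / (2 * (2 - x)) := by
    have : 0 < 1 - x := by linarith
    positivity
  linarith

lemma x₂curve233_eq (x : ℝ) : x₂curve233 x = x ^ 2 * (2 - x) := by
  unfold x₂curve233
  ring

lemma one_sub_x₂curve233_pos {x : ℝ} (hx0 : 0 ≤ x) (hx1 : x < 1) : 0 < 1 - x₂curve233 x := by
  have hfactor : 1 - x₂curve233 x = (1 - x) * (1 + x * (1 - x)) := by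
    rw [x₂curve233_eq]
    ring
  have : 0 < 1 - x := by linarith
  rw [hfactor]
  positivity

lemma mul_one_sub_εcurve233 {β x : ℝ} (hβ : β ≠ 0) (hx0 : x ≠ 0)
    (hs : 1 - x₂curve233 x ≠ 0) :
    β * (1 - εcurve233 β x) * (1 - x₂curve233 x) ^ 2 = log (2 - x) := by
  have hratio : x / (1 - (1 - x) ^ 2) = (2 - x)⁻¹ := by
    rw [show 1 - (1 - x) ^ 2 = x * (2 - x) by ring, div_mul_cancel_left₀ hx0]
  unfold εcurve233
  rw [hratio, log_inv]
  field_simp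
  ring

lemma mul_potential233_sub {β : ℝ} (hβ : β ≠ 0) (ε x₁ x₂ : ℝ) :
    β * (potential233 β ε x₁ x₂ - ((1 - 1 / β) - ε)) =
      3 - 2 * (1 - x₁) ^ 3 - 6 * x₁ * (1 - x₁) ^ 2
        - 3 * (1 - (1 - x₁) ^ 2) ^ 2 * exp (-(β * (1 - ε) * (1 - x₂) ^ 2))
        - (1 + 2 * x₂) * (β * (1 - ε) * (1 - x₂) ^ 2) := by
  unfold potential233
  simp only [neg_mul]
  field_simp
  ring

theorem stmt_17_general (β : ℝ) (hβ : 0 < β) (x : ℝ) (hx0 : 0 < x) (hx1 : x < 1) :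
    potential233 β (εcurve233 β x) x (x₂curve233 x)
      > (1 - 1/β) - εcurve233 β x := by
  suffices hpos :
      0 < β * (potential233 β (εcurve233 β x) x (x₂curve233 x) - ((1 - 1/β) - εcurve233 β x)) by
    linarith [pos_of_mul_pos_right hpos hβ.le]
  have hs := one_sub_x₂curve233_pos hx0.le hx1
  have h2x : 0 < 2 - x := by linarith
  rw [mul_potential233_sub hβ.ne', mul_one_sub_εcurve233 hβ.ne' hx0.ne' hs.ne',
    exp_neg, exp_log h2x, x₂curve233_eq]
  have hcancel : 3 * (1 - (1 - x) ^ 2) ^ 2 * (2 - x)⁻¹ = 3 * x ^ 2 * (2 - x) := by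
    field_simp
    ring
  linarith [log_two_sub_mul_lt hx0.le hx1]

theorem stmt_17 (β : ℝ) (hβ : 0 < β) (x : ℝ) (hx0 : 0 < x) (hx1 : x < 1)
    (hε0 : 0 ≤ εcurve233 β x) (hε1 : εcurve233 β x ≤ 1) :
    potential233 β (εcurve233 β x) x (x₂curve233 x)
      > (1 - 1/β) - εcurve233 β x :=
  stmt_17_general β hβ x hx0 hx1
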